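/- arXiv:1707.03923 — 4 statements merged into one kernel-verified Lean document; each statement's English description precedes it below -/
import Mathlib

section
/- Let 𝔽 be a field, σ a field automorphism of 𝔽, G a finite group, P ≤ G a subgroup, and N a finite-dimensional 𝔽P-module. Then the map φ : 𝔉_P^G(N)^σ → 𝔉_P^G(N^σ), defined by φ(f^σ)(a) := f(ι₀(a))^σ for all a ∈ 𝔽G and f ∈ 𝔉_P^G(N), is an isomorphism of 𝔽G-modules, where the domain is the σ-twist of the coinduced module regarded as an 𝔽G-module via ι₀^σ. -/
section Coinduced

variable {𝔽 : Type*} [Field 𝔽] {G : Type*} [Group G] (P : Subgroup G)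
variable {N : Type*} [AddCommGroup N] [Module 𝔽 N]

/-- Concrete model of the coinduced module `𝔉_P^G(N) = Hom_{𝔽P}(𝔽G, N)`: an `𝔽P`-linear map
`𝔽G → N` is uniquely determined by its values on the basis `G`, i.e. by a function `f : G → N`
satisfying `f (p * g) = p • f g` for `p ∈ P`. -/
def coinducedModule (ν : Representation 𝔽 P N) : Submodule 𝔽 (G → N) where
  carrier := {f | ∀ (p : P) (g : G), f (↑p * g) = ν p (f g)}
  add_mem' := by
    intro f g hf hg p x
    simp only [Pi.add_apply, hf p x, hg p x, map_add]
  zero_mem' := by intro p x; simp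
  smul_mem' := by
    intro c f hf p x
    simp only [Pi.smul_apply, hf p x, map_smul]

/-- The `𝔽G`-module structure on the coinduced module, `(a • f) x = f (x a)`, as a
representation of `G`. -/
def coinducedRep (ν : Representation 𝔽 P N) :
    Representation 𝔽 G (coinducedModule P ν) where
  toFun g :=
    { toFun := fun f => ⟨fun x => (f : G → N) (x * g), fun p x => by
        simpa [mul_assoc] using f.2 p (x * g)⟩
      map_add' := fun f₁ f₂ => by ext x; rfl
      map_smul' := fun c f => by ext x; rfl }
  map_one' := by
    ext f x
    simp
  map_mul' := fun g₁ g₂ => by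
    ext f x
    simp [mul_assoc]

end Coinduced

/-- The `σ⁻¹`-semilinear ring automorphism `ι₀` of the group algebra `𝔽G`, applying `σ⁻¹` to
every coefficient. -/
noncomputable def iotaZero {𝔽 : Type*} [Field 𝔽] (σ : 𝔽 ≃+* 𝔽) {G : Type*} [Group G]
    (a : MonoidAlgebra 𝔽 G) : MonoidAlgebra 𝔽 G :=
  MonoidAlgebra.ofCoeff (Finsupp.mapRange σ.symm (map_zero σ.symm) a.coeff)

/-!
Post-composition with `u` maps `𝔉_P^G(N)` bijectively onto `𝔉_P^G(N^σ)`; it is `σ`-semilinear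
and commutes with the action of `G`, which on both sides is right translation of the argument.
Checking on the basis `G` of `𝔽G`, such a map carries the action of `ι₀(a)` to that of `a`.
-/

section IotaZero

variable {𝔽 : Type*} [Field 𝔽] (σ : 𝔽 ≃+* 𝔽) {G : Type*} [Group G]

theorem iotaZero_add (a b : MonoidAlgebra 𝔽 G) :
    iotaZero σ (a + b) = iotaZero σ a + iotaZero σ b := by
  simp only [iotaZero, MonoidAlgebra.coeff_add, Finsupp.mapRange_add (map_add σ.symm),
    MonoidAlgebra.ofCoeff_add]

theorem iotaZero_single (g : G) (α : 𝔽) :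
    iotaZero σ (MonoidAlgebra.single g α) = MonoidAlgebra.single g (σ.symm α) := by
  simp only [iotaZero, MonoidAlgebra.coeff_single, Finsupp.mapRange_single,
    MonoidAlgebra.ofCoeff_single]

end IotaZero

theorem Representation.asAlgebraHom_iotaZero_of_semilinear
    {𝔽 : Type*} [Field 𝔽] (σ : 𝔽 ≃+* 𝔽) {G : Type*} [Group G]
    {V W : Type*} [AddCommGroup V] [Module 𝔽 V] [AddCommGroup W] [Module 𝔽 W]
    (ρ : Representation 𝔽 G V) (ρ' : Representation 𝔽 G W) (φ : V →+ W)
    (hφ_smul : ∀ (α : 𝔽) (v : V), φ (α • v) = σ α • φ v)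
    (hφ_rep : ∀ (g : G) (v : V), φ (ρ g v) = ρ' g (φ v))
    (a : MonoidAlgebra 𝔽 G) (v : V) :
    φ (ρ.asAlgebraHom (iotaZero σ a) v) = ρ'.asAlgebraHom a (φ v) := by
  induction a using MonoidAlgebra.induction_linear with
  | zero => simp [iotaZero]
  | add a b ha hb =>
    simp only [iotaZero_add, map_add, LinearMap.add_apply, ha, hb]
  | single g α =>
    simp only [iotaZero_single, Representation.asAlgebraHom_single, LinearMap.smul_apply,
      hφ_smul, hφ_rep, RingEquiv.apply_symm_apply]

section Coinduced

variable {𝔽 : Type*} [Field 𝔽] {G : Type*} [Group G] (P : Subgroup G)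
  {N N' : Type*} [AddCommGroup N] [Module 𝔽 N] [AddCommGroup N'] [Module 𝔽 N']
  {ν : Representation 𝔽 P N} {ν' : Representation 𝔽 P N'}

def coinducedModule.mapAddEquiv (u : N ≃+ N') (hu : ∀ (p : P) (x : N), ν' p (u x) = u (ν p x)) :
    coinducedModule P ν ≃+ coinducedModule P ν' where
  toFun f := ⟨fun g => u ((f : G → N) g), fun p g => by
    simp only [f.2 p g, hu]⟩
  invFun f := ⟨fun g => u.symm ((f : G → N') g), fun p g => by
    simp only [f.2 p g, u.symm_apply_eq, ← hu, u.apply_symm_apply]⟩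
  left_inv f := by ext g; simp
  right_inv f := by ext g; simp
  map_add' f₁ f₂ := by ext g; simp

end Coinduced

theorem coinduced_sigma_twist_general
    {𝔽 : Type*} [Field 𝔽] (σ : 𝔽 ≃+* 𝔽)
    {G : Type*} [Group G] (P : Subgroup G)
    {N N' : Type*} [AddCommGroup N] [Module 𝔽 N]
    [AddCommGroup N'] [Module 𝔽 N']
    (ν : Representation 𝔽 P N) (ν' : Representation 𝔽 P N')
    (u : N ≃+ N') (hu : ∀ (α : 𝔽) (x : N), u (α • x) = σ α • u x)
    (hν' : ∀ (p : P) (x : N), ν' p (u x) = u (ν p x)) :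
    ∃ Φ : (coinducedRep P ν).asModule ≃+ (coinducedRep P ν').asModule,
      (∀ (a : MonoidAlgebra 𝔽 G) (f : (coinducedRep P ν).asModule),
        Φ (iotaZero σ a • f) = a • Φ f)
      ∧ (∀ (f : (coinducedRep P ν).asModule) (g : G),
          (((coinducedRep P ν').asModuleEquiv (Φ f) : coinducedModule P ν') : G → N') g
            = u ((((coinducedRep P ν).asModuleEquiv f : coinducedModule P ν) : G → N) g)) := by
  let e := coinducedModule.mapAddEquiv P u hν'
  refine ⟨((coinducedRep P ν).asModuleEquiv.toAddEquiv.trans e).trans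
      (coinducedRep P ν').asModuleEquiv.symm.toAddEquiv, fun a f => ?_, fun f g => rfl⟩
  apply (coinducedRep P ν').asModuleEquiv.injective
  have he_smul (α : 𝔽) (f : coinducedModule P ν) : e (α • f) = σ α • e f := by
    ext g; exact hu α _
  exact Representation.asAlgebraHom_iotaZero_of_semilinear σ _ _ e.toAddMonoidHom he_smul
    (fun _ _ => rfl) a _

/-- Let `σ` be an automorphism of the field `𝔽`, `G` a finite group, `P ≤ G` and `N` a
finite-dimensional `𝔽P`-module (a representation `ν` of `P`), with `σ`-twist `N^σ` (the
representation `ν'` on `N'`, via the `σ`-semilinear isomorphism `u : N → N'`).  Then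
`φ : 𝔉_P^G(N)^σ → 𝔉_P^G(N^σ)`, `φ(f^σ)(a) = f(ι₀ a)^σ`, is an isomorphism of `𝔽G`-modules,
where the domain is the `σ`-twist of the coinduced module regarded as an `𝔽G`-module via
`ι₀^σ`: i.e. there is an additive bijection `Φ` of the coinduced modules with
`Φ (ι₀(a) • f) = a • Φ f` for all `a ∈ 𝔽G` and `(Φ f)(g) = u (f g)` for all `g ∈ G`. -/
theorem coinduced_sigma_twist
    {𝔽 : Type*} [Field 𝔽] (σ : 𝔽 ≃+* 𝔽)
    {G : Type*} [Group G] [Finite G] (P : Subgroup G)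
    {N N' : Type*} [AddCommGroup N] [Module 𝔽 N] [FiniteDimensional 𝔽 N]
    [AddCommGroup N'] [Module 𝔽 N']
    (ν : Representation 𝔽 P N) (ν' : Representation 𝔽 P N')
    (u : N ≃+ N') (hu : ∀ (α : 𝔽) (x : N), u (α • x) = σ α • u x)
    (hν' : ∀ (p : P) (x : N), ν' p (u x) = u (ν p x)) :
    ∃ Φ : (coinducedRep P ν).asModule ≃+ (coinducedRep P ν').asModule,
      (∀ (a : MonoidAlgebra 𝔽 G) (f : (coinducedRep P ν).asModule),
        Φ (iotaZero σ a • f) = a • Φ f)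
      ∧ (∀ (f : (coinducedRep P ν).asModule) (g : G),
          (((coinducedRep P ν').asModuleEquiv (Φ f) : coinducedModule P ν') : G → N') g
            = u ((((coinducedRep P ν).asModuleEquiv f : coinducedModule P ν) : G → N) g)) :=
  coinduced_sigma_twist_general σ P ν ν' u hu hν'
end

section
/- Let 𝔽 be a field, σ a field automorphism of 𝔽, G a finite group, P ≤ G a subgroup, and N a finite-dimensional 𝔽P-module. Then there is an isomorphism of 𝔽-algebras ι : End_{𝔽G}(𝔉_P^G(N))^σ → End_{𝔽G}(𝔉_P^G(N^σ)) determined by ι(B^σ)(φ(f^σ)) = φ((Bf)^σ) for all B ∈ End_{𝔽G}(𝔉_P^G(N)) and f ∈ 𝔉_P^G(N), where φ : 𝔉_P^G(N)^σ → 𝔉_P^G(N^σ) is the 𝔽G-module isomorphism φ(f^σ)(a) = f(ι₀(a))^σ. -/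
/-!
Applying the `σ`-semilinear, `P`-equivariant bijection `u : N → N^σ` pointwise is a
`G`-equivariant `σ`-semilinear bijection `𝔉_P^G(N) → 𝔉_P^G(N^σ)`, that is, an isomorphism of
`𝔽G`-modules which is semilinear over the automorphism of `𝔽G` applying `σ` to coefficients.
Conjugation by it is the ring isomorphism `ι` of endomorphism rings; as it is `σ`-semilinear on
the scalars `𝔽 ⊆ 𝔽G`, so is `ι`, i.e. `ι` is `𝔽`-linear on the twist.
-/

attribute [local instance] RingHomInvPair.of_ringEquiv RingHomInvPair.of_ringEquiv_symm

namespace MonoidAlgebra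

theorem mapRingEquiv_algebraMap {k k' G : Type*} [CommSemiring k] [CommSemiring k'] [Monoid G]
    (σ : k ≃+* k') (a : k) :
    mapRingEquiv G σ (algebraMap k k[G] a) = algebraMap k' k'[G] (σ a) :=
  RingHom.congr_fun (mapRingHom_comp_algebraMap _) a

end MonoidAlgebra

namespace Representation

open scoped MonoidAlgebra

variable {k k' G V W : Type*} [CommSemiring k] [CommSemiring k'] [Monoid G]
  [AddCommMonoid V] [Module k V] [AddCommMonoid W] [Module k' W]
  {ρ : Representation k G V} {ρ' : Representation k' G W} {σ : k ≃+* k'}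

def asModuleSemilinearEquiv (e : V ≃ₛₗ[(σ : k →+* k')] W)
    (he : ∀ g v, e (ρ g v) = ρ' g (e v)) :
    ρ.asModule ≃ₛₗ[(MonoidAlgebra.mapRingEquiv G σ : k[G] →+* k'[G])] ρ'.asModule where
  toAddEquiv :=
    ρ.asModuleEquiv.toAddEquiv.trans (e.toAddEquiv.trans ρ'.asModuleEquiv.symm.toAddEquiv)
  map_smul' r x := by
    induction r using MonoidAlgebra.induction_linear with
    | zero => simp
    | add r s hr hs => simp_all [add_smul]
    | single g a =>
      rw [RingHom.coe_coe, MonoidAlgebra.mapRingEquiv_single]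
      change e (ρ.asModuleEquiv (MonoidAlgebra.single g a • x)) =
        ρ'.asModuleEquiv
          (MonoidAlgebra.single g (σ a) • ρ'.asModuleEquiv.symm (e (ρ.asModuleEquiv x)))
      simp only [asModuleEquiv_map_smul, asAlgebraHom_single, LinearEquiv.apply_symm_apply,
        LinearMap.smul_apply]
      exact (map_smulₛₗ e a _).trans (congrArg _ (he g _))

@[simp]
theorem asModuleEquiv_asModuleSemilinearEquiv (e : V ≃ₛₗ[(σ : k →+* k')] W)
    (he : ∀ g v, e (ρ g v) = ρ' g (e v)) (x : ρ.asModule) :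
    ρ'.asModuleEquiv (asModuleSemilinearEquiv e he x) = e (ρ.asModuleEquiv x) :=
  rfl

end Representation

section CoinducedCongr

variable {𝔽 𝔽' : Type*} [Field 𝔽] [Field 𝔽'] {σ : 𝔽 ≃+* 𝔽'} {G : Type*} [Group G]
  (P : Subgroup G) {N N' : Type*} [AddCommGroup N] [Module 𝔽 N] [AddCommGroup N']
  [Module 𝔽' N'] (ν : Representation 𝔽 P N) (ν' : Representation 𝔽' P N')

def coinducedModuleCongr (u : N ≃ₛₗ[(σ : 𝔽 →+* 𝔽')] N')
    (hu : ∀ p x, ν' p (u x) = u (ν p x)) :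
    coinducedModule P ν ≃ₛₗ[(σ : 𝔽 →+* 𝔽')] coinducedModule P ν' where
  toFun f := ⟨fun g => u ((f : G → N) g), fun p g => by
    show u ((f : G → N) (p * g)) = ν' p (u ((f : G → N) g))
    rw [f.2 p g, hu]⟩
  invFun f := ⟨fun g => u.symm ((f : G → N') g), fun p g => by
    show u.symm ((f : G → N') (p * g)) = ν p (u.symm ((f : G → N') g))
    rw [f.2 p g, u.symm_apply_eq, ← hu, u.apply_symm_apply]⟩
  left_inv f := Subtype.ext (funext fun g => u.symm_apply_apply _)
  right_inv f := Subtype.ext (funext fun g => u.apply_symm_apply _)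
  map_add' f₁ f₂ := Subtype.ext (funext fun g => map_add u _ _)
  map_smul' a f := Subtype.ext (funext fun g => map_smulₛₗ u a _)

variable {P ν ν'}

@[simp]
theorem coe_coinducedModuleCongr_apply (u : N ≃ₛₗ[(σ : 𝔽 →+* 𝔽')] N')
    (hu : ∀ p x, ν' p (u x) = u (ν p x)) (f : coinducedModule P ν) (g : G) :
    (coinducedModuleCongr P ν ν' u hu f : G → N') g = u ((f : G → N) g) :=
  rfl

theorem coinducedModuleCongr_coinducedRep (u : N ≃ₛₗ[(σ : 𝔽 →+* 𝔽')] N')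
    (hu : ∀ p x, ν' p (u x) = u (ν p x)) (g : G) (f : coinducedModule P ν) :
    coinducedModuleCongr P ν ν' u hu (coinducedRep P ν g f) =
      coinducedRep P ν' g (coinducedModuleCongr P ν ν' u hu f) :=
  rfl

end CoinducedCongr

theorem coinduced_end_sigma_twist_general
    {𝔽 : Type*} [Field 𝔽] (σ : 𝔽 ≃+* 𝔽)
    {G : Type*} [Group G] (P : Subgroup G)
    {N N' : Type*} [AddCommGroup N] [Module 𝔽 N]
    [AddCommGroup N'] [Module 𝔽 N']
    (ν : Representation 𝔽 P N) (ν' : Representation 𝔽 P N')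
    (u : N ≃+ N') (hu : ∀ (α : 𝔽) (x : N), u (α • x) = σ α • u x)
    (hν' : ∀ (p : P) (x : N), ν' p (u x) = u (ν p x)) :
    ∃ ι : Module.End (MonoidAlgebra 𝔽 G) (coinducedRep P ν).asModule ≃+*
          Module.End (MonoidAlgebra 𝔽 G) (coinducedRep P ν').asModule,
      (∀ (α : 𝔽) (B B₂ : Module.End (MonoidAlgebra 𝔽 G) (coinducedRep P ν).asModule),
        (∀ m, B₂ m = algebraMap 𝔽 (MonoidAlgebra 𝔽 G) α • B m) →
        ∀ m', ι B₂ m' = algebraMap 𝔽 (MonoidAlgebra 𝔽 G) (σ α) • ι B m')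
      ∧ (∀ (B : Module.End (MonoidAlgebra 𝔽 G) (coinducedRep P ν).asModule)
          (f : (coinducedRep P ν).asModule) (f' : (coinducedRep P ν').asModule),
          (∀ g : G, (((coinducedRep P ν').asModuleEquiv f' : coinducedModule P ν') : G → N') g
              = u ((((coinducedRep P ν).asModuleEquiv f : coinducedModule P ν) : G → N) g)) →
          ∀ g : G,
            (((coinducedRep P ν').asModuleEquiv (ι B f') : coinducedModule P ν') : G → N') g
              = u ((((coinducedRep P ν).asModuleEquiv (B f) : coinducedModule P ν) : G → N) g)) := by
  let uσ : N ≃ₛₗ[(σ : 𝔽 →+* 𝔽)] N' := { u with map_smul' := hu }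
  let φ := Representation.asModuleSemilinearEquiv _ (coinducedModuleCongr_coinducedRep uσ hν')
  refine ⟨φ.conjRingEquiv, fun α B B₂ hB m' => ?_, fun B f f' hf g => ?_⟩
  · rw [LinearEquiv.conjRingEquiv_apply_apply, LinearEquiv.conjRingEquiv_apply_apply, hB,
      map_smulₛₗ, RingHom.coe_coe, MonoidAlgebra.mapRingEquiv_algebraMap]
  · obtain rfl : f' = φ f :=
      (coinducedRep P ν').asModuleEquiv.injective (Subtype.ext (funext hf))
    rw [LinearEquiv.conjRingEquiv_apply_apply, LinearEquiv.symm_apply_apply,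
      Representation.asModuleEquiv_asModuleSemilinearEquiv, coe_coinducedModuleCongr_apply]
    rfl

/-- Let `σ` be an automorphism of the field `𝔽`, `G` a finite group, `P ≤ G` and `N` a
finite-dimensional `𝔽P`-module (a representation `ν` of `P`) with `σ`-twist `N^σ` (the
representation `ν'` on `N'`, via the `σ`-semilinear isomorphism `u : N → N'`).  Then there is an
`𝔽`-algebra isomorphism `ι : End_{𝔽G}(𝔉_P^G(N))^σ → End_{𝔽G}(𝔉_P^G(N^σ))`, i.e. a ring
isomorphism of the endomorphism algebras which is `σ`-semilinear over `𝔽` and satisfies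
`ι(B^σ)(φ(f^σ)) = φ((Bf)^σ)`, where `φ(f^σ) = u ∘ f` is the identification
`𝔉_P^G(N)^σ ≅ 𝔉_P^G(N^σ)`. -/
theorem coinduced_end_sigma_twist
    {𝔽 : Type*} [Field 𝔽] (σ : 𝔽 ≃+* 𝔽)
    {G : Type*} [Group G] [Finite G] (P : Subgroup G)
    {N N' : Type*} [AddCommGroup N] [Module 𝔽 N] [FiniteDimensional 𝔽 N]
    [AddCommGroup N'] [Module 𝔽 N']
    (ν : Representation 𝔽 P N) (ν' : Representation 𝔽 P N')
    (u : N ≃+ N') (hu : ∀ (α : 𝔽) (x : N), u (α • x) = σ α • u x)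
    (hν' : ∀ (p : P) (x : N), ν' p (u x) = u (ν p x)) :
    ∃ ι : Module.End (MonoidAlgebra 𝔽 G) (coinducedRep P ν).asModule ≃+*
          Module.End (MonoidAlgebra 𝔽 G) (coinducedRep P ν').asModule,
      (∀ (α : 𝔽) (B B₂ : Module.End (MonoidAlgebra 𝔽 G) (coinducedRep P ν).asModule),
        (∀ m, B₂ m = algebraMap 𝔽 (MonoidAlgebra 𝔽 G) α • B m) →
        ∀ m', ι B₂ m' = algebraMap 𝔽 (MonoidAlgebra 𝔽 G) (σ α) • ι B m')
      ∧ (∀ (B : Module.End (MonoidAlgebra 𝔽 G) (coinducedRep P ν).asModule)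
          (f : (coinducedRep P ν).asModule) (f' : (coinducedRep P ν').asModule),
          (∀ g : G, (((coinducedRep P ν').asModuleEquiv f' : coinducedModule P ν') : G → N') g
              = u ((((coinducedRep P ν).asModuleEquiv f : coinducedModule P ν) : G → N) g)) →
          ∀ g : G,
            (((coinducedRep P ν').asModuleEquiv (ι B f') : coinducedModule P ν') : G → N') g
              = u ((((coinducedRep P ν).asModuleEquiv (B f) : coinducedModule P ν) : G → N) g)) :=
  coinduced_end_sigma_twist_general σ P ν ν' u hu hν'
end

section
/- Let n be a positive integer, K = ℚ(ζ_n) the n-th cyclotomic field, and σ ∈ Gal(K/ℚ) an automorphism that fixes every root of unity of 2-power order in K and squares every root of unity of odd order in K. Let m be an odd positive integer and suppose x ∈ K satisfies x² = m. Then σ(x) = x if m ≡ ±1 (mod 8), and σ(x) = −x if m ≡ ±3 (mod 8). -/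
/-!
Choose `d` with `d ≡ 1` modulo the `2`-part and `d ≡ 2` modulo the odd part of a suitable
multiple of `n`; then `σ` acts on the roots of unity of `K` as `ζ ↦ ζ ^ d`, so it is the
restriction of the automorphism `τ : ζ ↦ ζ ^ d` of `L = ℚ(ζ_{4mn})`. In `L` a square root of `m`
is a product of quadratic Gauss sums `g_p` over the prime factors `p` of `m`, each times `i`
when `p ≡ 3 (mod 4)`. Since `τ` squares `p`-th roots of unity, `τ g_p = (2|p) g_p`, while `τ`
fixes `i`; hence `τ √m = χ₈(m) √m`, and the same holds for `σ` on `x = ±√m`.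
-/

open ZMod

theorem Nat.ModEq.coprime_iff {a b m : ℕ} (h : a ≡ b [MOD m]) : a.Coprime m ↔ b.Coprime m := by
  rw [Nat.Coprime, Nat.Coprime, h.gcd_eq]

theorem map_eq_mul_of_sq_eq_sq {R F : Type*} [CommRing R] [NoZeroDivisors R] [FunLike F R R]
    [AddMonoidHomClass F R R] (τ : F) {x y ε : R} (hxy : x ^ 2 = y ^ 2) (hy : τ y = ε * y) :
    τ x = ε * x := by
  rcases eq_or_eq_neg_of_sq_eq_sq x y hxy with rfl | rfl
  · exact hy
  · rw [map_neg, hy, mul_neg]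

theorem map_eq_pow_of_coprime {M F : Type*} [CommMonoid M] [FunLike F M M] [MonoidHomClass F M M]
    (f : F) {a b c d e : ℕ} (hab : a.Coprime b) (ha : ∀ w : M, w ^ a = 1 → f w = w ^ d)
    (hb : ∀ w : M, w ^ b = 1 → f w = w ^ e) (hca : c ≡ d [MOD a]) (hcb : c ≡ e [MOD b])
    {z : M} (hz : z ^ (a * b) = 1) : f z = z ^ c := by
  have hmod : ∀ {x y : ℕ}, x ≡ y [MOD a] → x ≡ y [MOD b] → z ^ x = z ^ y := fun hxa hxb =>
    pow_eq_pow_of_modEq ((Nat.modEq_and_modEq_iff_modEq_mul hab).mp ⟨hxa, hxb⟩) hz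
  -- `z = z ^ u * z ^ v` splits `z` into an `a`-torsion and a `b`-torsion part
  obtain ⟨u, hua, hub⟩ := Nat.chineseRemainder hab 1 0
  obtain ⟨v, hva, hvb⟩ := Nat.chineseRemainder hab 0 1
  have hu : (z ^ u) ^ a = 1 := by
    rw [← pow_mul, hmod (y := 0) (Nat.modEq_zero_iff_dvd.mpr (dvd_mul_left a u))
      (by simpa using hub.mul_right a), pow_zero]
  have hv : (z ^ v) ^ b = 1 := by
    rw [← pow_mul, hmod (y := 0) (by simpa using hva.mul_right b)
      (Nat.modEq_zero_iff_dvd.mpr (dvd_mul_left b v)), pow_zero]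
  calc f z = f (z ^ u * z ^ v) := by
        rw [← pow_add, hmod (x := u + v) (y := 1) (by simpa using hua.add hva)
          (by simpa using hub.add hvb), pow_one]
    _ = z ^ (u * d + v * e) := by rw [map_mul, ha _ hu, hb _ hv, ← pow_mul, ← pow_mul, pow_add]
    _ = z ^ c := hmod (((hua.mul_right d).add (hva.mul_right e)).trans (by simpa using hca.symm))
        (((hub.mul_right d).add (hvb.mul_right e)).trans (by simpa using hcb.symm))

theorem exists_map_eq_pow_of_fix_two_power_of_sq_odd {M F : Type*} [CommMonoid M]
    [FunLike F M M] [MonoidHomClass F M M] (σ : F)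
    (h2 : ∀ z : M, (∃ k : ℕ, z ^ (2 ^ k) = 1) → σ z = z)
    (hodd : ∀ z : M, (∃ k : ℕ, Odd k ∧ z ^ k = 1) → σ z = z ^ 2) {n m : ℕ} (hn : n ≠ 0)
    (hm : Odd m) :
    ∃ d : ℕ, d ≡ 1 [MOD 4] ∧ d ≡ 2 [MOD m] ∧ d.Coprime n ∧ ∀ z : M, z ^ n = 1 → σ z = z ^ d := by
  obtain ⟨k, b, hb, rfl⟩ := Nat.exists_eq_two_pow_mul_odd hn
  have hmb : (2 : ℕ).Coprime (m * b) := Nat.coprime_two_left.mpr (hm.mul hb)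
  have hcop : (2 ^ (k + 2)).Coprime (m * b) := Nat.Coprime.pow_left _ hmb
  obtain ⟨d, hdA, hdB⟩ := Nat.chineseRemainder hcop 1 2
  have hdvd : 2 ^ k * b ∣ 2 ^ (k + 2) * (m * b) :=
    mul_dvd_mul (pow_dvd_pow 2 (by omega)) (dvd_mul_left b m)
  refine ⟨d, hdA.of_dvd (pow_dvd_pow 2 (by omega : 2 ≤ k + 2)), hdB.of_dvd (dvd_mul_right m b),
    Nat.Coprime.coprime_dvd_right hdvd (Nat.Coprime.mul_right
      (hdA.coprime_iff.mpr (Nat.coprime_one_left _)) (hdB.coprime_iff.mpr hmb)), fun z hz => ?_⟩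
  refine map_eq_pow_of_coprime σ hcop (fun w hw => (h2 w ⟨_, hw⟩).trans (pow_one w).symm)
    (fun w hw => hodd w ⟨_, hm.mul hb, hw⟩) hdA hdB ?_
  obtain ⟨c, hc⟩ := hdvd
  rw [hc, pow_mul, hz, one_pow]

namespace IsCyclotomicExtension

open Polynomial

theorem nonempty_algHom_of_isPrimitiveRoot {n : ℕ} [NeZero n] {F : Type*} (K : Type*) {L : Type*}
    [Field F] [Field K] [Field L] [Algebra F K] [Algebra F L] [IsCyclotomicExtension {n} F K]
    {μ : L} (hμ : IsPrimitiveRoot μ n) : Nonempty (K →ₐ[F] L) :=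
  have := isSplittingField_X_pow_sub_one n F K
  ⟨IsSplittingField.lift K (X ^ n - 1) (by simpa using X_pow_sub_one_splits hμ)⟩

theorem algHom_ext_of_pow_eq_one {n : ℕ} [NeZero n] {F K A : Type*} [Field F] [Field K]
    [CommRing A] [Algebra F K] [Algebra F A] [IsCyclotomicExtension {n} F K] {f g : K →ₐ[F] A}
    (h : ∀ z : K, z ^ n = 1 → f z = g z) : f = g :=
  ((zeta_spec n F K).powerBasis F).algHom_ext <| by
    simpa using h _ (zeta_spec n F K).pow_eq_one

theorem exists_algEquiv_apply_eq_pow {N : ℕ} [NeZero N] {K L : Type*} [Field K] [Field L]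
    [Algebra K L] [IsCyclotomicExtension {N} K L] (hirr : Irreducible (cyclotomic N K))
    {d : ℕ} (hd : d.Coprime N) : ∃ τ : L ≃ₐ[K] L, ∀ z : L, z ^ N = 1 → τ z = z ^ d := by
  have hζ := zeta_spec N K L
  refine ⟨fromZetaAut (hζ.pow_of_coprime d hd) hirr, fun z hz => ?_⟩
  obtain ⟨j, -, rfl⟩ := hζ.eq_pow_of_pow_eq_one hz
  rw [map_pow, fromZetaAut_spec, pow_right_comm]

end IsCyclotomicExtension

section GaussSum

variable {L F : Type*} [Field L] [CharZero L] [FunLike F L L] [RingHomClass F L L]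

theorem exists_sq_eq_χ₄_mul_and_map_eq_χ₈_mul (τ : F) {p : ℕ} [Fact p.Prime] (hp2 : p ≠ 2)
    {ζ : L} (hζ : IsPrimitiveRoot ζ p) (hτζ : τ ζ = ζ ^ 2) :
    ∃ g : L, g ^ 2 = χ₄ p * p ∧ τ g = χ₈ p * g := by
  have hchar : ringChar (ZMod p) ≠ 2 := by rwa [ZMod.ringChar_zmod_n]
  let χ := (quadraticChar (ZMod p)).ringHomComp (Int.castRingHom L)
  have hχ : χ.IsQuadratic := (quadraticChar_isQuadratic _).comp _
  let ψ := AddChar.zmodChar p hζ.pow_eq_one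
  have hτψ : ∀ a, τ (ψ a) = ψ.mulShift 2 a := fun a => by
    rw [AddChar.mulShift_apply, two_mul, AddChar.map_add_eq_mul, ← sq, AddChar.zmodChar_apply,
      map_pow, hτζ, ← pow_mul, ← pow_mul, mul_comm]
  have hτχ : ∀ a, τ (χ a) = χ a := fun a => map_intCast τ _
  refine ⟨gaussSum χ ψ, ?_, ?_⟩
  · rw [gaussSum_sq ((MulChar.ringHomComp_ne_one_iff Int.cast_injective).mpr
      (quadraticChar_ne_one hchar)) hχ (AddChar.zmodChar_primitive_of_primitive_root p hζ)]
    simp [quadraticChar_neg_one hchar]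
  · have h2 : (2 : ℕ).Coprime p := (Nat.coprime_primes Nat.prime_two Fact.out).mpr hp2.symm
    have hshift := gaussSum_mulShift_eq χ ψ (ZMod.unitOfCoprime 2 h2)
    rw [ZMod.coe_unitOfCoprime, hχ.inv] at hshift
    calc τ (gaussSum χ ψ) = gaussSum χ (ψ.mulShift 2) := by
          simp only [gaussSum, map_sum, map_mul, hτχ, hτψ]
      _ = χ 2 * gaussSum χ ψ := by simpa using hshift
      _ = χ₈ p * gaussSum χ ψ := by simp [χ, quadraticChar_two hchar]

theorem exists_sq_eq_prime_and_map_eq_χ₈_mul (τ : F) {i : L} (hi : i ^ 2 = -1) (hτi : τ i = i)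
    {p : ℕ} [Fact p.Prime] (hp : Odd p) {ζ : L} (hζ : IsPrimitiveRoot ζ p) (hτζ : τ ζ = ζ ^ 2) :
    ∃ y : L, y ^ 2 = p ∧ τ y = χ₈ p * y := by
  obtain ⟨g, hg, hτg⟩ :=
    exists_sq_eq_χ₄_mul_and_map_eq_χ₈_mul τ (hp.ne_two_of_dvd_nat dvd_rfl) hζ hτζ
  rcases Nat.odd_mod_four_iff.mp (Nat.odd_iff.mp hp) with h | h
  · exact ⟨g, by simpa [χ₄_nat_one_mod_four h] using hg, hτg⟩
  · refine ⟨g * i, ?_, by rw [map_mul, hτg, hτi, mul_assoc]⟩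
    rw [mul_pow, hg, hi, χ₄_nat_three_mod_four h]
    push_cast
    ring

theorem exists_sq_eq_natCast_and_map_eq_χ₈_mul (τ : F) {i : L} (hi : i ^ 2 = -1) (hτi : τ i = i)
    {m : ℕ} (hm : Odd m)
    (hroot : ∀ p, p.Prime → p ∣ m → ∃ ζ : L, IsPrimitiveRoot ζ p ∧ τ ζ = ζ ^ 2) :
    ∃ y : L, y ^ 2 = m ∧ τ y = χ₈ m * y := by
  induction m using Nat.recOnMul with
  | zero => simp at hm
  | one => exact ⟨1, by simp, by simp⟩
  | prime p hp =>
    have : Fact p.Prime := ⟨hp⟩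
    obtain ⟨ζ, hζ, hτζ⟩ := hroot p hp dvd_rfl
    exact exists_sq_eq_prime_and_map_eq_χ₈_mul τ hi hτi hm hζ hτζ
  | mul a b iha ihb =>
    obtain ⟨ha, hb⟩ := Nat.odd_mul.mp hm
    obtain ⟨y, hy, hτy⟩ := iha ha fun p hp hpa => hroot p hp (dvd_mul_of_dvd_left hpa b)
    obtain ⟨z, hz, hτz⟩ := ihb hb fun p hp hpb => hroot p hp (dvd_mul_of_dvd_right hpb a)
    refine ⟨y * z, by rw [mul_pow, hy, hz, Nat.cast_mul], ?_⟩
    rw [map_mul, hτy, hτz, Nat.cast_mul, map_mul]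
    push_cast
    ring

theorem exists_sq_eq_natCast_and_map_eq_χ₈_mul_of_isPrimitiveRoot (τ : F) {m d : ℕ} (hm : Odd m)
    (hd4 : d ≡ 1 [MOD 4]) (hdm : d ≡ 2 [MOD m]) {ζ : L} (hζ : IsPrimitiveRoot ζ (4 * m))
    (hτζ : τ ζ = ζ ^ d) :
    ∃ y : L, y ^ 2 = m ∧ τ y = χ₈ m * y := by
  have hpos : 0 < 4 * m := Nat.mul_pos (by norm_num) hm.pos
  have hτpow : ∀ k, τ (ζ ^ k) = (ζ ^ k) ^ d := fun k => by rw [map_pow, hτζ, pow_right_comm]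
  have hi : IsPrimitiveRoot (ζ ^ m) 4 := hζ.pow hpos (mul_comm 4 m)
  refine exists_sq_eq_natCast_and_map_eq_χ₈_mul τ (i := ζ ^ m)
    (hi.pow (by norm_num) (by norm_num : 4 = 2 * 2)).eq_neg_one_of_two_right ?_ hm ?_
  · rw [hτpow, pow_eq_pow_of_modEq hd4 hi.pow_eq_one, pow_one]
  · intro p hp hpm
    have hζp : IsPrimitiveRoot (ζ ^ (4 * m / p)) p :=
      hζ.pow hpos (Nat.div_mul_cancel (dvd_mul_of_dvd_right hpm 4)).symm
    exact ⟨_, hζp, by rw [hτpow, pow_eq_pow_of_modEq (hdm.of_dvd hpm) hζp.pow_eq_one]⟩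

end GaussSum

open Polynomial IsCyclotomicExtension in
theorem map_eq_χ₈_mul_of_sq_eq_natCast {n : ℕ} [NeZero n] {K : Type*} [Field K] [Algebra ℚ K]
    [IsCyclotomicExtension {n} ℚ K] (σ : K ≃ₐ[ℚ] K) {m d : ℕ} (hm : Odd m)
    (hd4 : d ≡ 1 [MOD 4]) (hdm : d ≡ 2 [MOD m]) (hdn : d.Coprime n)
    (hσ : ∀ z : K, z ^ n = 1 → σ z = z ^ d) {x : K} (hx : x ^ 2 = m) :
    σ x = χ₈ m * x := by
  let N := 4 * m * n
  have hN : 0 < N := Nat.mul_pos (Nat.mul_pos (by norm_num) hm.pos) (NeZero.pos n)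
  have : NeZero N := ⟨hN.ne'⟩
  let L := CyclotomicField N ℚ
  have : IsCyclotomicExtension {N} ℚ L := CyclotomicField.isCyclotomicExtension N ℚ
  have hdN : d.Coprime N := Nat.Coprime.mul_right (Nat.Coprime.mul_right
    (hd4.coprime_iff.mpr (Nat.coprime_one_left 4)) (hdm.coprime_iff.mpr
      (Nat.coprime_two_left.mpr hm))) hdn
  obtain ⟨τ, hτ⟩ := exists_algEquiv_apply_eq_pow (L := L) (cyclotomic.irreducible_rat hN) hdN
  have hζ := zeta_spec N ℚ L
  obtain ⟨ι⟩ := nonempty_algHom_of_isPrimitiveRoot (F := ℚ) K (hζ.pow hN rfl : IsPrimitiveRoot _ n)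
  have hcomm : (τ : L →ₐ[ℚ] L).comp ι = ι.comp σ := algHom_ext_of_pow_eq_one (n := n) fun z hz => by
    have hιz : ι z ^ (4 * m * n) = 1 := by rw [← map_pow, mul_comm, pow_mul, hz, one_pow, map_one]
    simp [hσ z hz, hτ _ hιz]
  obtain ⟨y, hy, hτy⟩ := exists_sq_eq_natCast_and_map_eq_χ₈_mul_of_isPrimitiveRoot τ hm hd4 hdm
    (hζ.pow hN (mul_comm _ _) : IsPrimitiveRoot _ (4 * m))
    (hτ _ (by rw [pow_right_comm, hζ.pow_eq_one, one_pow]))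
  have hτx : τ (ι x) = χ₈ m * ι x :=
    map_eq_mul_of_sq_eq_sq τ (by rw [← map_pow, hx, map_natCast, hy]) hτy
  refine ι.injective ?_
  simpa [hτx] using (AlgHom.congr_fun hcomm x).symm

theorem galois_action_on_odd_square_roots_general
    (n : ℕ+) (σ : CyclotomicField n ℚ ≃ₐ[ℚ] CyclotomicField n ℚ)
    (hσ2 : ∀ z : CyclotomicField n ℚ, (∃ k : ℕ, z ^ (2 ^ k) = 1) → σ z = z)
    (hσodd : ∀ z : CyclotomicField n ℚ, (∃ k : ℕ, Odd k ∧ z ^ k = 1) → σ z = z ^ 2)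
    (m : ℕ) (hm : Odd m)
    (x : CyclotomicField n ℚ) (hx : x ^ 2 = (m : CyclotomicField n ℚ)) :
    ((m % 8 = 1 ∨ m % 8 = 7) → σ x = x) ∧
    ((m % 8 = 3 ∨ m % 8 = 5) → σ x = -x) := by
  have : IsCyclotomicExtension {(n : ℕ)} ℚ (CyclotomicField n ℚ) :=
    CyclotomicField.isCyclotomicExtension n ℚ
  obtain ⟨d, hd4, hdm, hdn, hσd⟩ :=
    exists_map_eq_pow_of_fix_two_power_of_sq_odd σ hσ2 hσodd n.ne_zero hm
  have hσx := map_eq_χ₈_mul_of_sq_eq_natCast σ hm hd4 hdm hdn hσd hx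
  rw [χ₈_nat_eq_if_mod_eight, Nat.odd_iff.mp hm] at hσx
  refine ⟨fun h => by simpa [h] using hσx, fun h => ?_⟩
  have h' : ¬(m % 8 = 1 ∨ m % 8 = 7) := by omega
  simpa [h'] using hσx

/-- Let `K = ℚ(ζ_n)` and let `σ ∈ Gal(K/ℚ)` fix every root of unity of `2`-power order and
square every root of unity of odd order.  If `m` is an odd positive integer and `x ∈ K`
satisfies `x² = m`, then `σ x = x` when `m ≡ ±1 (mod 8)` and `σ x = -x` when
`m ≡ ±3 (mod 8)`. -/
theorem galois_action_on_odd_square_roots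
    (n : ℕ+) (σ : CyclotomicField n ℚ ≃ₐ[ℚ] CyclotomicField n ℚ)
    (hσ2 : ∀ z : CyclotomicField n ℚ, (∃ k : ℕ, z ^ (2 ^ k) = 1) → σ z = z)
    (hσodd : ∀ z : CyclotomicField n ℚ, (∃ k : ℕ, Odd k ∧ z ^ k = 1) → σ z = z ^ 2)
    (m : ℕ) (hm : Odd m) (hmpos : 0 < m)
    (x : CyclotomicField n ℚ) (hx : x ^ 2 = (m : CyclotomicField n ℚ)) :
    ((m % 8 = 1 ∨ m % 8 = 7) → σ x = x) ∧
    ((m % 8 = 3 ∨ m % 8 = 5) → σ x = -x) :=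
  galois_action_on_odd_square_roots_general n σ hσ2 hσodd m hm x hx
end

section
/- Let q be a power of an odd prime, let ℓ be a nonnegative integer, let K = ℚ(ζ_n) be a cyclotomic field, and let σ ∈ Gal(K/ℚ) be an automorphism that fixes every root of unity of 2-power order in K and squares every root of unity of odd order in K. Suppose x ∈ K satisfies x² = q^ℓ. Then σ(x) = x if q ≡ ±1 (mod 8), and σ(x) = (−1)^ℓ·x if q ≡ ±3 (mod 8). -/
/-!
Only the odd part of the exponent matters: if `x² = p^N` with `N` even then `x = ±p^(N/2)` is
rational, and otherwise `x / p^⌊N/2⌋` is a square root of `p`.  A square root of `p` in `ℚ(ζ_n)`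
forces `p ∣ n`, since `p` is unramified in `ℚ(ζ_n)` when `p ∤ n`; hence `ζ_p ∈ ℚ(ζ_n)` and the
quadratic Gauss sum `g = ∑ₐ (a/p) ζ_pᵃ` lies in `ℚ(ζ_n)`.  As `g² = ±p`, the quotient `g / √p` is a
fourth root of unity and is fixed by `σ`, while `σ ζ_p = ζ_p²` gives `σ g = (2/p) g`.  So
`σ √p = (2/p) √p`, and `(2/p) = χ₈(p)` is the second supplementary law.
-/

open NumberField Ideal ZMod

section QuadraticGaussSum

variable {F : Type*} [Field F] {p : ℕ} [Fact p.Prime] {ζ : F}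

noncomputable def quadraticGaussSum (hζ : ζ ^ p = 1) : F :=
  gaussSum ((quadraticChar (ZMod p)).ringHomComp (Int.castRingHom F)) (AddChar.zmodChar p hζ)

theorem quadraticGaussSum_sq [CharZero F] (hp : p ≠ 2) (hζ : IsPrimitiveRoot ζ p) :
    quadraticGaussSum hζ.pow_eq_one ^ 2 = quadraticChar (ZMod p) (-1) * p := by
  have hchar : ringChar (ZMod p) ≠ 2 := by rwa [ZMod.ringChar_zmod_n]
  rw [quadraticGaussSum, gaussSum_sq
    ((MulChar.ringHomComp_ne_one_iff (RingHom.injective_int _)).mpr (quadraticChar_ne_one hchar))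
    ((quadraticChar_isQuadratic _).comp _) (AddChar.zmodChar_primitive_of_primitive_root p hζ)]
  simp

theorem map_quadraticGaussSum (f : F →+* F) (hζ : ζ ^ p = 1) {t : ZMod p} (ht : t ≠ 0)
    (hf : f ζ = ζ ^ t.val) :
    f (quadraticGaussSum hζ) = quadraticChar (ZMod p) t * quadraticGaussSum hζ := by
  set χ := (quadraticChar (ZMod p)).ringHomComp (Int.castRingHom F)
  have hshift : f (quadraticGaussSum hζ) = gaussSum χ ((AddChar.zmodChar p hζ).mulShift t) := by
    simp only [quadraticGaussSum, gaussSum, map_sum, map_mul]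
    refine Finset.sum_congr rfl fun a _ => ?_
    rw [AddChar.mulShift_apply, AddChar.zmodChar_apply, AddChar.zmodChar_apply, map_pow, hf,
      ← pow_mul, ZMod.val_mul, ← pow_eq_pow_mod _ hζ]
    simp [χ]
  have hχt : χ t = quadraticChar (ZMod p) t := rfl
  have hsq : (quadraticChar (ZMod p) t : F) * quadraticChar (ZMod p) t = 1 := by
    rw [← Int.cast_mul, ← sq, quadraticChar_sq_one ht, Int.cast_one]
  have hmulShift := gaussSum_mulShift χ (AddChar.zmodChar p hζ) (Ne.isUnit ht).unit
  rw [IsUnit.unit_spec] at hmulShift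
  rw [hshift, quadraticGaussSum, ← hmulShift, ← mul_assoc, hχt, hsq, one_mul]

end QuadraticGaussSum

theorem IsPrimitiveRoot.map_eq_chi8_mul_of_sq_eq_prime {F : Type*} [Field F] [CharZero F]
    {p : ℕ} [Fact p.Prime] {ζ : F} (hζ : IsPrimitiveRoot ζ p) (hp : p ≠ 2) (σ : F →+* F)
    (hσ4 : ∀ z : F, z ^ 4 = 1 → σ z = z) (hσζ : σ ζ = ζ ^ 2) {w : F} (hw : w ^ 2 = p) :
    σ w = χ₈ p * w := by
  have hp0 : (p : F) ≠ 0 := Nat.cast_ne_zero.mpr (Fact.out : p.Prime).ne_zero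
  have hw0 : w ≠ 0 := by rintro rfl; exact hp0 (by simpa using hw.symm)
  set g := quadraticGaussSum hζ.pow_eq_one
  set ε : F := ((quadraticChar (ZMod p) (-1) : ℤ) : F)
  have hε : ε ^ 2 = 1 := by
    rw [← Int.cast_pow, quadraticChar_sq_one (neg_ne_zero.mpr one_ne_zero), Int.cast_one]
  set u := g / w
  have hu2 : u ^ 2 = ε := by
    rw [div_pow, quadraticGaussSum_sq hp hζ, hw, mul_div_cancel_right₀ _ hp0]
  have hu0 : u ≠ 0 := by
    rintro hu
    rw [hu, zero_pow two_ne_zero] at hu2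
    simp [← hu2] at hε
  have hσu : σ u = u := hσ4 u (by rw [show 4 = 2 * 2 from rfl, pow_mul, hu2, hε])
  have hval2 : (2 : ZMod p).val = 2 := (ZMod.val_two_eq_two_mod p).trans
    (Nat.mod_eq_of_lt (lt_of_le_of_ne (Fact.out : p.Prime).two_le hp.symm))
  have h2 : (2 : ZMod p) ≠ 0 := by
    intro h; simp [h] at hval2
  have hσg : σ g = χ₈ p * g := by
    rw [map_quadraticGaussSum σ hζ.pow_eq_one h2 (by rw [hval2, hσζ]),
      quadraticChar_two (by rwa [ZMod.ringChar_zmod_n]), ZMod.card]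
  have hwgu : w = g / u := by rw [eq_div_iff hu0, mul_div_cancel₀ _ hw0]
  calc σ w = σ g / σ u := by rw [hwgu, map_div₀]
    _ = χ₈ p * w := by rw [hσg, hσu, hwgu, mul_div_assoc]

theorem map_eq_pow_mul_of_sq_eq_pow {F : Type*} [Field F] (σ : F →+* F) {c ε : F}
    (hc : σ c = c) (hε : ε ^ 2 = 1) (hsqrt : ∀ w : F, w ^ 2 = c → σ w = ε * w)
    {N : ℕ} {x : F} (hx : x ^ 2 = c ^ N) : σ x = ε ^ N * x := by
  obtain ⟨k, rfl | rfl⟩ := Nat.even_or_odd' N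
  · rw [pow_mul, hε, one_pow, one_mul]
    rcases sq_eq_sq_iff_eq_or_eq_neg.mp (hx.trans (pow_mul' c 2 k)) with rfl | rfl <;>
      simp [hc]
  · rcases eq_or_ne c 0 with rfl | hc0
    · simp_all
    have hck : c ^ k ≠ 0 := pow_ne_zero k hc0
    have hw : (x / c ^ k) ^ 2 = c := by
      rw [div_pow, hx, div_eq_iff (pow_ne_zero 2 hck)]
      ring
    rw [pow_succ, pow_mul, hε, one_pow, one_mul, ← div_mul_cancel₀ x hck, map_mul, map_pow, hc,
      hsqrt _ hw, mul_assoc]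

namespace IsCyclotomicExtension.Rat

variable {p : ℕ} [Fact p.Prime] {K : Type*} [Field K] [NumberField K]

theorem dvd_of_sq_eq_prime {n : ℕ} [NeZero n] [IsCyclotomicExtension {n} ℚ K] {w : K}
    (hw : w ^ 2 = p) : p ∣ n := by
  by_contra hpn
  set W : 𝓞 K := ⟨w, IsIntegral.of_pow two_pos
    (by rw [hw, ← map_natCast (algebraMap ℤ K)]; exact isIntegral_algebraMap)⟩
  have hW : W ^ 2 = (p : 𝓞 K) := RingOfIntegers.ext (by push_cast; exact hw)
  obtain ⟨⟨P, _, _⟩⟩ := (span {(p : ℤ)}).nonempty_primesOver (S := 𝓞 K)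
  have hp0 : span {(p : ℤ)} ≠ ⊥ := by simp [(Fact.out : p.Prime).ne_zero]
  have hunram := ramificationIdx_eq_of_not_dvd p K P hpn
  rw [← ramificationIdx'_eq_ramificationIdx _ _ hp0] at hunram
  have hle : map (algebraMap ℤ (𝓞 K)) (span {(p : ℤ)}) ≤ P :=
    map_le_iff_le_comap.mpr (le_of_eq ((liesOver_iff _ _).mp ‹_›))
  refine (ramificationIdx'_ne_one_iff hle).mpr ?_ hunram
  have hWP : W ∈ P := by
    refine Ideal.IsPrime.mem_of_pow_mem ‹_› 2 ?_
    simpa [hW] using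
      hle (mem_map_of_mem (algebraMap ℤ (𝓞 K)) (mem_span_singleton_self (p : ℤ)))
  rw [map_span, Set.image_singleton, span_le, Set.singleton_subset_iff, eq_intCast,
    Int.cast_natCast, ← hW]
  exact pow_mem_pow hWP 2

theorem map_eq_chi8_mul_of_sq_eq_prime (n : ℕ) [NeZero n] [IsCyclotomicExtension {n} ℚ K]
    (hp : p ≠ 2) (σ : K →+* K) (hσ4 : ∀ z : K, z ^ 4 = 1 → σ z = z)
    (hσp : ∀ z : K, z ^ p = 1 → σ z = z ^ 2)
    {w : K} (hw : w ^ 2 = p) : σ w = χ₈ p * w := by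
  obtain ⟨d, hd⟩ := dvd_of_sq_eq_prime (n := n) hw
  have hζ : IsPrimitiveRoot (zeta n ℚ K ^ d) p :=
    (zeta_spec n ℚ K).pow (NeZero.pos n) (by rw [hd, mul_comm])
  exact hζ.map_eq_chi8_mul_of_sq_eq_prime hp σ hσ4 (hσp _ hζ.pow_eq_one) hw

end IsCyclotomicExtension.Rat

theorem galois_action_on_square_roots_of_odd_prime_powers_general
    (p a : ℕ) (hp : p.Prime) (hpodd : Odd p) (q : ℕ) (hq : q = p ^ a)
    (ℓ : ℕ) (n : ℕ+)
    (σ : CyclotomicField n ℚ ≃ₐ[ℚ] CyclotomicField n ℚ)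
    (hσ2 : ∀ z : CyclotomicField n ℚ, (∃ k : ℕ, z ^ (2 ^ k) = 1) → σ z = z)
    (hσodd : ∀ z : CyclotomicField n ℚ, (∃ k : ℕ, Odd k ∧ z ^ k = 1) → σ z = z ^ 2)
    (x : CyclotomicField n ℚ) (hx : x ^ 2 = (q : CyclotomicField n ℚ) ^ ℓ) :
    ((q % 8 = 1 ∨ q % 8 = 7) → σ x = x) ∧
    ((q % 8 = 3 ∨ q % 8 = 5) → σ x = (-1) ^ ℓ * x) := by
  subst hq
  have := Fact.mk hp
  have hp2 : p ≠ 2 := by rintro rfl; norm_num at hpodd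
  have hχ₈ : ((χ₈ p : ℤ) : CyclotomicField n ℚ) ^ 2 = 1 := by
    rw [χ₈_nat_eq_if_mod_eight, if_neg (by simp [Nat.odd_iff.mp hpodd])]
    split_ifs <;> norm_num
  -- Mathlib's instance is stated for `CyclotomicField.algebra`; instance search does not identify
  -- it with the `ℚ`-algebra structure `DivisionRing.toRatAlgebra` used by `NumberField` results.
  have : IsCyclotomicExtension {(n : ℕ)} ℚ (CyclotomicField n ℚ) :=
    CyclotomicField.isCyclotomicExtension _ _
  have hsqrt (w : CyclotomicField n ℚ) (hw : w ^ 2 = p) : σ w = χ₈ p * w :=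
    IsCyclotomicExtension.Rat.map_eq_chi8_mul_of_sq_eq_prime n hp2 (σ : _ →+* _)
      (fun z hz => hσ2 z ⟨2, hz⟩) (fun z hz => hσodd z ⟨p, hpodd, hz⟩) hw
  have key : σ x = (χ₈ (p ^ a : ℕ) : CyclotomicField n ℚ) ^ ℓ * x := by
    rw [Nat.cast_pow, map_pow, Int.cast_pow, ← pow_mul]
    exact map_eq_pow_mul_of_sq_eq_pow (σ : _ →+* _) (map_natCast σ p) hχ₈ hsqrt
      (by rw [hx, Nat.cast_pow, pow_mul])
  rw [χ₈_nat_eq_if_mod_eight, if_neg (by simp [Nat.odd_iff.mp hpodd.pow])] at key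
  constructor <;> rintro (h | h) <;> simp [key, h]

/-- Let `q` be a power of an odd prime, `ℓ ≥ 0`, `K = ℚ(ζ_n)`, and `σ ∈ Gal(K/ℚ)` an
automorphism fixing every root of unity of `2`-power order and squaring every root of unity of
odd order.  If `x ∈ K` satisfies `x² = q^ℓ`, then `σ x = x` when `q ≡ ±1 (mod 8)`, and
`σ x = (-1)^ℓ · x` when `q ≡ ±3 (mod 8)`. -/
theorem galois_action_on_square_roots_of_odd_prime_powers
    (p a : ℕ) (hp : p.Prime) (hpodd : Odd p) (ha : 0 < a) (q : ℕ) (hq : q = p ^ a)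
    (ℓ : ℕ) (n : ℕ+)
    (σ : CyclotomicField n ℚ ≃ₐ[ℚ] CyclotomicField n ℚ)
    (hσ2 : ∀ z : CyclotomicField n ℚ, (∃ k : ℕ, z ^ (2 ^ k) = 1) → σ z = z)
    (hσodd : ∀ z : CyclotomicField n ℚ, (∃ k : ℕ, Odd k ∧ z ^ k = 1) → σ z = z ^ 2)
    (x : CyclotomicField n ℚ) (hx : x ^ 2 = (q : CyclotomicField n ℚ) ^ ℓ) :
    ((q % 8 = 1 ∨ q % 8 = 7) → σ x = x) ∧
    ((q % 8 = 3 ∨ q % 8 = 5) → σ x = (-1) ^ ℓ * x) :=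
  galois_action_on_square_roots_of_odd_prime_powers_general p a hp hpodd q hq ℓ n σ hσ2 hσodd x hx
end
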